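/- For positive definite density matrices ρ, σ, the quantity Δ_max(ρ,σ) := inf over reverse tests of ½‖p−q‖₁ satisfies 1 − F_min(ρ,σ) ≤ Δ_max(ρ,σ) ≤ √(1 − F_min(ρ,σ)²), where F_min(ρ,σ) = tr(ρ#σ). -/

import Mathlib

open Matrix BigOperators
open scoped ComplexOrder Classical

noncomputable def msqrt {n : Type*} [Fintype n] [DecidableEq n]
    (A : Matrix n n ℂ) : Matrix n n ℂ :=
  if h : A.PosSemidef then
    (h.1.eigenvectorUnitary : Matrix n n ℂ) *
      diagonal (RCLike.ofReal ∘ Real.sqrt ∘ h.1.eigenvalues) *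
      (star h.1.eigenvectorUnitary : Matrix n n ℂ)
  else 0

noncomputable def gm {n : Type*} [Fintype n] [DecidableEq n]
    (A B : Matrix n n ℂ) : Matrix n n ℂ :=
  msqrt A * msqrt ((msqrt A)⁻¹ * B * (msqrt A)⁻¹) * msqrt A

def IsDensity {n : Type*} [Fintype n] (ρ : Matrix n n ℂ) : Prop :=
  ρ.PosSemidef ∧ ρ.trace = 1

structure IsReverseTest {d m : ℕ} (ρ σ : Matrix (Fin d) (Fin d) ℂ)
    (R : Fin m → Matrix (Fin d) (Fin d) ℂ) (p q : Fin m → ℝ) : Prop where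
  states : ∀ x, IsDensity (R x)
  p_nonneg : ∀ x, 0 ≤ p x
  q_nonneg : ∀ x, 0 ≤ q x
  p_sum : ∑ x, p x = 1
  q_sum : ∑ x, q x = 1
  rho_eq : ∑ x, (p x : ℂ) • R x = ρ
  sigma_eq : ∑ x, (q x : ℂ) • R x = σ

noncomputable def Fmin {d : ℕ} (ρ σ : Matrix (Fin d) (Fin d) ℂ) : ℝ :=
  sSup {r : ℝ | ∃ (m : ℕ) (R : Fin m → Matrix (Fin d) (Fin d) ℂ) (p q : Fin m → ℝ),
    IsReverseTest ρ σ R p q ∧ r = ∑ x, Real.sqrt (p x * q x)}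

noncomputable def Dmax {d : ℕ} (ρ σ : Matrix (Fin d) (Fin d) ℂ) : ℝ :=
  sInf {r : ℝ | ∃ (m : ℕ) (R : Fin m → Matrix (Fin d) (Fin d) ℂ) (p q : Fin m → ℝ),
    IsReverseTest ρ σ R p q ∧ r = (∑ x, |p x - q x|) / 2}

noncomputable def choiMatrix {d e : ℕ}
    (Λ : Matrix (Fin d) (Fin d) ℂ →ₗ[ℂ] Matrix (Fin e) (Fin e) ℂ) :
    Matrix (Fin d × Fin e) (Fin d × Fin e) ℂ :=
  Matrix.of fun pr qr => Λ (Matrix.single pr.1 qr.1 1) pr.2 qr.2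

def IsCPTP {d e : ℕ}
    (Λ : Matrix (Fin d) (Fin d) ℂ →ₗ[ℂ] Matrix (Fin e) (Fin e) ℂ) : Prop :=
  (choiMatrix Λ).PosSemidef ∧ ∀ A, (Λ A).trace = A.trace

noncomputable def mcfc {n : Type*} [Fintype n] [DecidableEq n]
    (f : ℝ → ℝ) (A : Matrix n n ℂ) : Matrix n n ℂ :=
  if h : A.IsHermitian then h.cfc f else 0

def IsOperatorMonotoneOnNonneg (f : ℝ → ℝ) : Prop :=
  ∀ (d : ℕ) (A B : Matrix (Fin d) (Fin d) ℂ), A.PosSemidef → B.PosSemidef →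
    (B - A).PosSemidef → (mcfc f B - mcfc f A).PosSemidef

noncomputable def traceNorm {n : Type*} [Fintype n] [DecidableEq n]
    (A : Matrix n n ℂ) : ℝ :=
  ((msqrt (Aᴴ * A)).trace).re

/-!
Over reverse tests, the classical fidelity `∑ √(p x q x)` is at most `tr (ρ # σ)`, with equality
for one particular test; both bounds then follow from the classical Fuchs–van de Graaf
inequalities. The upper bound on the fidelity is Ando's characterisation of `ρ # σ` as the
largest `S` with `[[ρ, S], [S, σ]] ≥ 0`: a reverse test gives such a block matrix for
`S = ∑ √(p x q x) • R x`, and the Schur complement `S ρ⁻¹ S ≤ σ`, conjugated by `ρ^{-1/2}`, becomes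
`T² ≤ ρ^{-1/2} σ ρ^{-1/2}` for `T = ρ^{-1/2} S ρ^{-1/2}`, so `T ≤ (ρ^{-1/2} σ ρ^{-1/2})^{1/2}` by
operator monotonicity of the square root. For equality, diagonalise
`(ρ^{-1/2} σ ρ^{-1/2})^{1/2} = U diag(μ) U*`: the columns `vᵢ` of `V = ρ^{1/2} U` satisfy
`ρ = ∑ vᵢ vᵢ*`, `σ = ∑ μᵢ² vᵢ vᵢ*` and `ρ # σ = ∑ μᵢ vᵢ vᵢ*`, and the normalised `vᵢ vᵢ*` form a
reverse test whose fidelity is `∑ μᵢ ‖vᵢ‖² = tr (ρ # σ)`.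
-/

open scoped MatrixOrder Matrix.Norms.L2Operator

namespace Matrix

theorem fromBlocks_sum {ι l m n o α : Type*} [AddCommMonoid α] (s : Finset ι)
    (A : ι → Matrix n l α) (B : ι → Matrix n m α) (C : ι → Matrix o l α)
    (D : ι → Matrix o m α) :
    fromBlocks (∑ i ∈ s, A i) (∑ i ∈ s, B i) (∑ i ∈ s, C i) (∑ i ∈ s, D i) =
      ∑ i ∈ s, fromBlocks (A i) (B i) (C i) (D i) := by
  ext (_ | _) (_ | _) <;> simp [sum_apply]

variable {𝕜 n : Type*} [RCLike 𝕜] [Fintype n] [DecidableEq n]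

theorem PosSemidef.fromBlocks_smul {R : Matrix n n 𝕜} (hR : R.PosSemidef) (s t : 𝕜) :
    (fromBlocks ((star s * s) • R) ((star s * t) • R) ((star t * s) • R)
      ((star t * t) • R)).PosSemidef := by
  convert hR.conjTranspose_mul_mul_same (fromCols (s • 1) (t • 1) : Matrix n (n ⊕ n) 𝕜) using 1
  rw [conjTranspose_fromCols_eq_fromRows_conjTranspose, fromRows_mul, fromRows_mul_fromCols]
  simp [smul_smul, mul_comm]

theorem mul_diagonal_mul_conjTranspose_eq_sum (V : Matrix n n 𝕜) (c : n → 𝕜) :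
    V * diagonal c * Vᴴ = ∑ i, c i • vecMulVec (V.col i) (star (V.col i)) := by
  ext j k
  rw [mul_apply]
  simp only [mul_diagonal, conjTranspose_apply, sum_apply, smul_apply, vecMulVec_apply,
    col_apply, Pi.star_apply, smul_eq_mul]
  exact Finset.sum_congr rfl fun i _ => by ring

end Matrix

section FuchsVanDeGraaf

variable {ι : Type*} [Fintype ι] {p q : ι → ℝ}

theorem abs_sub_eq_abs_sqrt_sub_mul_sqrt_add {x y : ℝ} (hx : 0 ≤ x) (hy : 0 ≤ y) :
    |x - y| = |√x - √y| * (√x + √y) := by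
  rw [← abs_of_nonneg (by positivity : 0 ≤ √x + √y), ← abs_mul,
    show (√x - √y) * (√x + √y) = √x ^ 2 - √y ^ 2 by ring, Real.sq_sqrt hx, Real.sq_sqrt hy]

theorem sum_sqrt_sub_sqrt_sq (hp : ∀ i, 0 ≤ p i) (hq : ∀ i, 0 ≤ q i) (hp1 : ∑ i, p i = 1)
    (hq1 : ∑ i, q i = 1) : ∑ i, (√(p i) - √(q i)) ^ 2 = 2 - 2 * ∑ i, √(p i * q i) := by
  have h (i : ι) : (√(p i) - √(q i)) ^ 2 = p i + q i - 2 * √(p i * q i) := by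
    rw [sub_sq, Real.sq_sqrt (hp i), Real.sq_sqrt (hq i), Real.sqrt_mul (hp i)]; ring
  simp only [h, Finset.sum_sub_distrib, Finset.sum_add_distrib, ← Finset.mul_sum, hp1, hq1]
  ring

theorem sum_sqrt_add_sqrt_sq (hp : ∀ i, 0 ≤ p i) (hq : ∀ i, 0 ≤ q i) (hp1 : ∑ i, p i = 1)
    (hq1 : ∑ i, q i = 1) : ∑ i, (√(p i) + √(q i)) ^ 2 = 2 + 2 * ∑ i, √(p i * q i) := by
  have h (i : ι) : (√(p i) + √(q i)) ^ 2 = p i + q i + 2 * √(p i * q i) := by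
    rw [add_sq, Real.sq_sqrt (hp i), Real.sq_sqrt (hq i), Real.sqrt_mul (hp i)]; ring
  simp only [h, Finset.sum_add_distrib, ← Finset.mul_sum, hp1, hq1]
  ring

theorem one_sub_sum_sqrt_mul_le_half_sum_abs_sub (hp : ∀ i, 0 ≤ p i) (hq : ∀ i, 0 ≤ q i)
    (hp1 : ∑ i, p i = 1) (hq1 : ∑ i, q i = 1) :
    1 - ∑ i, √(p i * q i) ≤ (∑ i, |p i - q i|) / 2 := by
  have h : ∑ i, (√(p i) - √(q i)) ^ 2 ≤ ∑ i, |p i - q i| := by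
    refine Finset.sum_le_sum fun i _ => ?_
    rw [← sq_abs, sq, abs_sub_eq_abs_sqrt_sub_mul_sqrt_add (hp i) (hq i)]
    exact mul_le_mul_of_nonneg_left (abs_sub_le_iff.mpr ⟨by linarith [Real.sqrt_nonneg (q i)],
      by linarith [Real.sqrt_nonneg (p i)]⟩) (abs_nonneg _)
  linarith [sum_sqrt_sub_sqrt_sq hp hq hp1 hq1]

theorem half_sum_abs_sub_le_sqrt_one_sub_sq (hp : ∀ i, 0 ≤ p i) (hq : ∀ i, 0 ≤ q i)
    (hp1 : ∑ i, p i = 1) (hq1 : ∑ i, q i = 1) :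
    (∑ i, |p i - q i|) / 2 ≤ √(1 - (∑ i, √(p i * q i)) ^ 2) := by
  refine Real.le_sqrt_of_sq_le ?_
  have hCS := Finset.sum_mul_sq_le_sq_mul_sq Finset.univ (fun i => |√(p i) - √(q i)|)
    (fun i => √(p i) + √(q i))
  simp only [sq_abs, ← abs_sub_eq_abs_sqrt_sub_mul_sqrt_add (hp _) (hq _),
    sum_sqrt_sub_sqrt_sq hp hq hp1 hq1, sum_sqrt_add_sqrt_sq hp hq hp1 hq1] at hCS
  linarith

end FuchsVanDeGraaf

section GeometricMean

variable {n : Type*} [Fintype n] [DecidableEq n]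

theorem msqrt_eq_cfcSqrt {A : Matrix n n ℂ} (hA : A.PosSemidef) : msqrt A = CFC.sqrt A := by
  rw [CFC.sqrt_eq_real_sqrt A hA.nonneg, cfcₙ_eq_cfc, hA.1.cfc_eq, msqrt, dif_pos hA]
  rfl

theorem gm_eq_cfcSqrt {ρ σ : Matrix n n ℂ} (hρ : ρ.PosSemidef) (hσ : σ.PosSemidef) :
    gm ρ σ = CFC.sqrt ρ * CFC.sqrt ((CFC.sqrt ρ)⁻¹ * σ * (CFC.sqrt ρ)⁻¹) * CFC.sqrt ρ := by
  have hB : 0 ≤ (CFC.sqrt ρ)⁻¹ := (CFC.sqrt_nonneg ρ).posSemidef.inv.nonneg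
  rw [gm, msqrt_eq_cfcSqrt hρ,
    msqrt_eq_cfcSqrt (conjugate_nonneg_of_nonneg hσ.nonneg hB).posSemidef]

theorem le_gm_of_posSemidef_fromBlocks {ρ σ S : Matrix n n ℂ} (hρ : ρ.PosDef)
    (hσ : σ.PosSemidef) (hS : S.PosSemidef) (h : (Matrix.fromBlocks ρ S S σ).PosSemidef) :
    S ≤ gm ρ σ := by
  have : Invertible ρ := hρ.isUnit.invertible
  have hSchur : S * ρ⁻¹ * S ≤ σ := by
    have := (hρ.fromBlocks₁₁ S σ).mp (by rwa [hS.1.eq])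
    rwa [hS.1.eq] at this
  set A := CFC.sqrt ρ
  set B := A⁻¹
  have hA : IsUnit A.det := (Matrix.isUnit_iff_isUnit_det A).mp <|
    CFC.isUnit_sqrt_iff_isStrictlyPositive.mpr (Matrix.isStrictlyPositive_iff_posDef.mpr hρ)
  have hB : B = CFC.sqrt ρ⁻¹ := hρ.posSemidef.inv_sqrt
  have hB0 : 0 ≤ B := hB ▸ CFC.sqrt_nonneg _
  have hBB : B * B = ρ⁻¹ := hB ▸ CFC.sqrt_mul_sqrt_self _ hρ.posSemidef.inv.nonneg
  set T := B * S * B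
  have hT : 0 ≤ T := conjugate_nonneg_of_nonneg hS.nonneg hB0
  have hTT : T * T ≤ B * σ * B := calc
    T * T = B * (S * (B * B) * S) * B := by simp only [T, mul_assoc]
    _ ≤ B * σ * B := by rw [hBB]; exact conjugate_le_conjugate_of_nonneg hSchur hB0
  have hTM : T ≤ CFC.sqrt (B * σ * B) := CFC.sqrt_mul_self T hT ▸ CFC.sqrt_le_sqrt _ _ hTT
  calc S = (A * B) * S * (B * A) := by
        rw [Matrix.mul_nonsing_inv A hA, Matrix.nonsing_inv_mul A hA, one_mul, mul_one]
    _ = A * T * A := by simp only [T, mul_assoc]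
    _ ≤ A * CFC.sqrt (B * σ * B) * A := conjugate_le_conjugate_of_nonneg hTM (CFC.sqrt_nonneg ρ)
    _ = gm ρ σ := (gm_eq_cfcSqrt hρ.posSemidef hσ).symm

theorem exists_conj_diagonal_eq_gm {ρ σ : Matrix n n ℂ} (hρ : ρ.PosDef) (hσ : σ.PosSemidef) :
    ∃ (V : Matrix n n ℂ) (μ : n → ℝ), IsUnit V ∧ (∀ i, 0 ≤ μ i) ∧ V * Vᴴ = ρ ∧
      V * Matrix.diagonal (fun i => ((μ i ^ 2 : ℝ) : ℂ)) * Vᴴ = σ ∧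
      V * Matrix.diagonal (fun i => (μ i : ℂ)) * Vᴴ = gm ρ σ := by
  set A := CFC.sqrt ρ
  set M := CFC.sqrt (A⁻¹ * σ * A⁻¹)
  have hM : M.PosSemidef := (CFC.sqrt_nonneg _).posSemidef
  set U : Matrix n n ℂ := (hM.1.eigenvectorUnitary : Matrix n n ℂ)
  set μ := hM.1.eigenvalues
  have hA : IsUnit A :=
    CFC.isUnit_sqrt_iff_isStrictlyPositive.mpr (Matrix.isStrictlyPositive_iff_posDef.mpr hρ)
  have hAdet : IsUnit A.det := (Matrix.isUnit_iff_isUnit_det A).mp hA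
  have hAA : A * A = ρ := CFC.sqrt_mul_sqrt_self ρ hρ.posSemidef.nonneg
  have hAH : Aᴴ = A := (CFC.sqrt_nonneg ρ).posSemidef.1.eq
  have hUU : U * star U = 1 := Unitary.mul_star_self_of_mem hM.1.eigenvectorUnitary.2
  have hUU' : star U * U = 1 := Unitary.star_mul_self_of_mem hM.1.eigenvectorUnitary.2
  have hUM : U * Matrix.diagonal (fun i => (μ i : ℂ)) * star U = M := by
    conv_rhs => rw [hM.1.spectral_theorem, Unitary.conjStarAlgAut_apply]
    rfl
  have hUMM : U * Matrix.diagonal (fun i => ((μ i ^ 2 : ℝ) : ℂ)) * star U = M * M := by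
    rw [← hUM, show ∀ D : Matrix n n ℂ,
        U * D * star U * (U * D * star U) = U * (D * (star U * U) * D) * star U by
      simp only [mul_assoc, implies_true], hUU', mul_one, Matrix.diagonal_mul_diagonal]
    simp [sq]
  have hMM : M * M = A⁻¹ * σ * A⁻¹ := CFC.sqrt_mul_sqrt_self _
    (conjugate_nonneg_of_nonneg hσ.nonneg (CFC.sqrt_nonneg ρ).posSemidef.inv.nonneg)
  have hconj (X : Matrix n n ℂ) : A * U * X * (A * U)ᴴ = A * (U * X * star U) * A := by
    rw [Matrix.conjTranspose_mul, hAH, ← Matrix.star_eq_conjTranspose]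
    simp only [mul_assoc]
  refine ⟨A * U, μ, hA.mul Unitary.isUnit_coe, hM.eigenvalues_nonneg, ?_, ?_, ?_⟩
  · simpa [hUU, hAA] using hconj 1
  · rw [hconj, hUMM, hMM]
    simp only [← mul_assoc, Matrix.mul_nonsing_inv A hAdet, one_mul]
    simp only [mul_assoc, Matrix.nonsing_inv_mul A hAdet, mul_one]
  · rw [hconj, hUM, gm_eq_cfcSqrt hρ.posSemidef hσ]

end GeometricMean

namespace IsReverseTest

variable {d m : ℕ} {ρ σ : Matrix (Fin d) (Fin d) ℂ} {R : Fin m → Matrix (Fin d) (Fin d) ℂ}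
  {p q : Fin m → ℝ}

theorem posSemidef_fromBlocks (hRT : IsReverseTest ρ σ R p q) :
    (Matrix.fromBlocks ρ (∑ x, (√(p x * q x) : ℂ) • R x) (∑ x, (√(p x * q x) : ℂ) • R x)
      σ).PosSemidef := by
  rw [← hRT.rho_eq, ← hRT.sigma_eq, Matrix.fromBlocks_sum]
  refine Matrix.posSemidef_sum _ fun x _ => ?_
  have hp := hRT.p_nonneg x
  have hq := hRT.q_nonneg x
  have key := (hRT.states x).1.fromBlocks_smul (√(p x) : ℂ) (√(q x) : ℂ)
  simp only [Complex.star_def, Complex.conj_ofReal, ← Complex.ofReal_mul, Real.mul_self_sqrt hp,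
    Real.mul_self_sqrt hq, ← Real.sqrt_mul hp, ← Real.sqrt_mul hq, mul_comm (q x)] at key
  exact key

theorem sum_sqrt_mul_le_re_trace_gm (hRT : IsReverseTest ρ σ R p q) (hρ : ρ.PosDef)
    (hσ : σ.PosSemidef) : ∑ x, √(p x * q x) ≤ (gm ρ σ).trace.re := by
  set S := ∑ x, (√(p x * q x) : ℂ) • R x
  have hS : S.PosSemidef :=
    Matrix.posSemidef_sum _ fun x _ => (hRT.states x).1.smul (by positivity)
  have hSgm := le_gm_of_posSemidef_fromBlocks hρ hσ hS hRT.posSemidef_fromBlocks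
  have htrS : S.trace = ((∑ x, √(p x * q x) : ℝ) : ℂ) := by
    simp [S, Matrix.trace_sum, Matrix.trace_smul, (hRT.states _).2]
  have := (Matrix.le_iff.mp hSgm).trace_nonneg
  rw [Matrix.trace_sub, sub_nonneg, htrS] at this
  simpa using (Complex.le_def.mp this).1

end IsReverseTest

section Construction

variable {d m : ℕ} {ρ σ : Matrix (Fin d) (Fin d) ℂ}

theorem isReverseTest_of_sum_smul_eq {P : Fin m → Matrix (Fin d) (Fin d) ℂ} {t a b : Fin m → ℝ}
    (hP : ∀ i, (P i).PosSemidef) (htr : ∀ i, (P i).trace = t i) (ht : ∀ i, 0 < t i)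
    (ha : ∀ i, 0 ≤ a i) (hb : ∀ i, 0 ≤ b i)
    (hρ : ∑ i, (a i : ℂ) • P i = ρ) (hσ : ∑ i, (b i : ℂ) • P i = σ)
    (hρ1 : ρ.trace = 1) (hσ1 : σ.trace = 1) :
    IsReverseTest ρ σ (fun i => ((t i)⁻¹ : ℂ) • P i) (fun i => a i * t i)
      (fun i => b i * t i) := by
  have htr_sum (c : Fin m → ℝ) :
      (∑ i, (c i : ℂ) • P i).trace = ((∑ i, c i * t i : ℝ) : ℂ) := by
    simp [Matrix.trace_sum, Matrix.trace_smul, htr]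
  have hrescale (c : Fin m → ℝ) (i : Fin m) :
      ((c i * t i : ℝ) : ℂ) • ((t i)⁻¹ : ℂ) • P i = (c i : ℂ) • P i := by
    rw [smul_smul, Complex.ofReal_mul, mul_assoc, mul_inv_cancel₀ (by exact_mod_cast (ht i).ne'),
      mul_one]
  refine ⟨fun i => ⟨(hP i).smul ?_, ?_⟩, fun i => mul_nonneg (ha i) (ht i).le,
    fun i => mul_nonneg (hb i) (ht i).le, ?_, ?_, ?_, ?_⟩
  · exact_mod_cast (inv_pos.mpr (ht i)).le
  · rw [Matrix.trace_smul, htr, smul_eq_mul, inv_mul_cancel₀ (by exact_mod_cast (ht i).ne')]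
  · exact_mod_cast (htr_sum a).symm.trans (hρ ▸ hρ1)
  · exact_mod_cast (htr_sum b).symm.trans (hσ ▸ hσ1)
  · simpa only [hrescale] using hρ
  · simpa only [hrescale] using hσ

theorem exists_isReverseTest_of_conj_diagonal {V : Matrix (Fin d) (Fin d) ℂ} (hV : IsUnit V)
    {a b : Fin d → ℝ} (ha : ∀ i, 0 ≤ a i) (hb : ∀ i, 0 ≤ b i)
    (hρ : V * Matrix.diagonal (fun i => (a i : ℂ)) * Vᴴ = ρ)
    (hσ : V * Matrix.diagonal (fun i => (b i : ℂ)) * Vᴴ = σ)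
    (hρ1 : ρ.trace = 1) (hσ1 : σ.trace = 1) :
    ∃ (R : Fin d → Matrix (Fin d) (Fin d) ℂ) (p q : Fin d → ℝ), IsReverseTest ρ σ R p q ∧
      ∑ i, √(p i * q i) = (V * Matrix.diagonal (fun i => (√(a i * b i) : ℂ)) * Vᴴ).trace.re := by
  set P : Fin d → Matrix (Fin d) (Fin d) ℂ := fun i => Matrix.vecMulVec (V.col i) (star (V.col i))
  set t : Fin d → ℝ := fun i => ∑ j, Complex.normSq (V j i)
  have htr (i : Fin d) : (P i).trace = t i := by
    simp [P, t, Matrix.trace_vecMulVec, dotProduct, Complex.mul_conj]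
  have ht (i : Fin d) : 0 < t i := by
    obtain ⟨j, hj⟩ : ∃ j, V j i ≠ 0 := by
      by_contra! h
      have hcol : V *ᵥ Pi.single i 1 = V *ᵥ 0 := by
        rw [Matrix.mulVec_single_one, Matrix.mulVec_zero]; ext j; exact h j
      simpa using Matrix.mulVec_injective_iff_isUnit.mpr hV hcol
    exact Finset.sum_pos' (fun j _ => Complex.normSq_nonneg _)
      ⟨j, Finset.mem_univ _, Complex.normSq_pos.mpr hj⟩
  have hdecomp (c : Fin d → ℂ) : V * Matrix.diagonal c * Vᴴ = ∑ i, c i • P i :=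
    Matrix.mul_diagonal_mul_conjTranspose_eq_sum V c
  refine ⟨_, _, _, isReverseTest_of_sum_smul_eq (fun i => Matrix.posSemidef_vecMulVec_self_star _)
    htr ht ha hb (by rw [← hρ, hdecomp]) (by rw [← hσ, hdecomp]) hρ1 hσ1, ?_⟩
  have hsqrt (i : Fin d) : √(a i * t i * (b i * t i)) = √(a i * b i) * t i := by
    rw [show a i * t i * (b i * t i) = a i * b i * t i ^ 2 by ring,
      Real.sqrt_mul (mul_nonneg (ha i) (hb i)), Real.sqrt_sq (ht i).le]
  simp [hsqrt, hdecomp, Matrix.trace_sum, Matrix.trace_smul, htr]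

theorem exists_isReverseTest_sum_sqrt_mul_eq_re_trace_gm (hρ : ρ.PosDef) (hσ : σ.PosSemidef)
    (hρ1 : ρ.trace = 1) (hσ1 : σ.trace = 1) :
    ∃ (R : Fin d → Matrix (Fin d) (Fin d) ℂ) (p q : Fin d → ℝ), IsReverseTest ρ σ R p q ∧
      ∑ x, √(p x * q x) = (gm ρ σ).trace.re := by
  obtain ⟨V, μ, hV, hμ, hρV, hσV, hgmV⟩ := exists_conj_diagonal_eq_gm hρ hσ
  obtain ⟨R, p, q, hRT, hF⟩ := exists_isReverseTest_of_conj_diagonal hV (a := 1)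
    (fun _ => zero_le_one) (fun i => sq_nonneg (μ i)) (by simpa using hρV) hσV hρ1 hσ1
  refine ⟨R, p, q, hRT, hF.trans ?_⟩
  simp only [Pi.one_apply, one_mul, Real.sqrt_sq (hμ _), hgmV]

end Construction

theorem stmt16 {d : ℕ} (ρ σ : Matrix (Fin d) (Fin d) ℂ)
    (hρ : ρ.PosDef) (hσ : σ.PosDef) (hρ1 : ρ.trace = 1) (hσ1 : σ.trace = 1) :
    1 - ((gm ρ σ).trace).re ≤ Dmax ρ σ ∧
      Dmax ρ σ ≤ Real.sqrt (1 - (((gm ρ σ).trace).re) ^ 2) := by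
  obtain ⟨R, p, q, hRT, hF⟩ :=
    exists_isReverseTest_sum_sqrt_mul_eq_re_trace_gm hρ hσ.posSemidef hρ1 hσ1
  unfold Dmax
  constructor
  · refine le_csInf ⟨_, d, R, p, q, hRT, rfl⟩ ?_
    rintro _ ⟨m, R', p', q', hRT', rfl⟩
    linarith [hRT'.sum_sqrt_mul_le_re_trace_gm hρ hσ.posSemidef,
      one_sub_sum_sqrt_mul_le_half_sum_abs_sub hRT'.p_nonneg hRT'.q_nonneg hRT'.p_sum hRT'.q_sum]
  · refine le_trans (csInf_le ⟨0, ?_⟩ ⟨d, R, p, q, hRT, rfl⟩) ?_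
    · rintro _ ⟨m, R', p', q', -, rfl⟩
      positivity
    · rw [← hF]
      exact half_sum_abs_sub_le_sqrt_one_sub_sq hRT.p_nonneg hRT.q_nonneg hRT.p_sum hRT.q_sum
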